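/- Let k be a field and R a commutative graded k-algebra with grading 𝒜 : ℕ → Submodule k R, 𝒜 0 = k·1, and suppose R is a Hilbert–Serre ring with Hilbert–Serre dimension d = d(R). Then for every finite-dimensional k-subspace V ⊆ R there exist a constant C > 0 and N ∈ ℕ such that for all n ≥ N, dim_k(k·1 + V + V² + ⋯ + Vⁿ) ≤ C·n^d, where V^i denotes the k-span of all products of i elements of V. Consequently, the Gelfand–Kirillov dimension of R over k, defined as GKdim_k(R) = sup_V limsup_{n→∞} log(dim_k(k·1 + V + ⋯ + Vⁿ))/log(n) with the supremum over all finite-dimensional k-subspaces V of R, satisfies GKdim_k(R) ≤ d(R). -/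

import Mathlib

/-- The boundedness condition defining Hilbert–Serre rings: for all `t ∈ (0,1)` the
Poincaré series `∑ F n * tⁿ` converges and `(1 - t) ^ d` times its sum is bounded by a
uniform constant `C > 0`. -/
def HSBound (F : ℕ → ℕ) (d : ℕ) : Prop :=
  ∃ C : ℝ, 0 < C ∧ ∀ t : ℝ, t ∈ Set.Ioo (0 : ℝ) 1 →
    Summable (fun n => (F n : ℝ) * t ^ n) ∧
      (1 - t) ^ d * (∑' n, (F n : ℝ) * t ^ n) ≤ C

/-- A graded algebra with grading `𝒜` is a *Hilbert–Serre ring* if every graded component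
is finite dimensional over `k` and the Poincaré series `∑ dim_k (𝒜 n) tⁿ` satisfies the
boundedness condition `HSBound` for some `d`. -/
def IsHilbertSerre {k R : Type*} [Field k] [CommRing R] [Algebra k R]
    (𝒜 : ℕ → Submodule k R) : Prop :=
  (∀ n, FiniteDimensional k (𝒜 n)) ∧
    ∃ d, HSBound (fun n => Module.finrank k (𝒜 n)) d

/-- The Hilbert–Serre dimension `d(R)`: the least `d` such that `(1-t)^d P_R(t)` is
bounded on `(0,1)`. -/
noncomputable def hsDim {k R : Type*} [Field k] [CommRing R] [Algebra k R]
    (𝒜 : ℕ → Submodule k R) : ℕ :=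
  sInf {d | HSBound (fun n => Module.finrank k (𝒜 n)) d}


/-- For a finite-dimensional subspace `V` of a `k`-algebra `R`, `gkGrowth V n` is
`dim_k (k·1 + V + V² + ⋯ + Vⁿ)`, where `Vⁱ` is the span of products of `i` elements
of `V` (so `V⁰ = k·1`). -/
noncomputable def gkGrowth {k R : Type*} [Field k] [CommRing R] [Algebra k R]
    (V : Submodule k R) (n : ℕ) : ℕ :=
  Module.finrank k ↥(∑ i ∈ Finset.range (n + 1), V ^ i)

/-!
Every finite-dimensional subspace `V` lies in `A≤m = 𝒜 0 + ⋯ + 𝒜 m` for some `m`, and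
`(A≤m)ⁿ ⊆ A≤(mn)`, so `d_V(n) ≤ ∑_{i ≤ mn} dim 𝒜 i`. Evaluating the Poincaré series at
`t = 1 - 1/(2N)`, where `tᴺ ≥ 1/2` by Bernoulli's inequality and `(1 - t)⁻ᵈ = (2N)ᵈ`, bounds the
partial sum `∑_{i ≤ N} dim 𝒜 i` by a constant times `Nᵈ`. Hence `d_V(n) = O(nᵈ)`, and taking
logarithms bounds each `limsup log d_V(n) / log n` by `d`.
-/

open Filter Finset Module Real

theorem Submodule.finrank_iSup_le_sum {K V ι : Type*} [DivisionRing K] [AddCommGroup V]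
    [Module K V] [Fintype ι] (p : ι → Submodule K V) [∀ i, FiniteDimensional K (p i)] :
    finrank K ↥(⨆ i, p i) ≤ ∑ i, finrank K (p i) := by
  classical
  rw [Submodule.iSup_eq_range_dfinsupp_lsum]
  exact (LinearMap.finrank_range_le _).trans (finrank_directSum K fun i => p i).le

section PoincareSeries

theorem one_half_le_one_sub_pow (N : ℕ) : (1 : ℝ) / 2 ≤ (1 - 1 / (2 * N)) ^ N := by
  rcases N.eq_zero_or_pos with rfl | hN
  · norm_num
  have hN' : (1 : ℝ) ≤ N := by exact_mod_cast hN
  calc (1 : ℝ) / 2 = 1 + N * -(1 / (2 * N)) := by field_simp; ring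
    _ ≤ (1 - 1 / (2 * N)) ^ N := by
      rw [sub_eq_add_neg]
      refine one_add_mul_le_pow ?_ N
      have : 1 / (2 * (N : ℝ)) ≤ 1 := by rw [div_le_one (by positivity)]; linarith
      linarith

theorem sum_range_mul_pow_le_tsum {a : ℕ → ℝ} (ha : ∀ n, 0 ≤ a n) {t : ℝ} (ht₀ : 0 ≤ t)
    (ht₁ : t ≤ 1) (hs : Summable fun n => a n * t ^ n) (N : ℕ) :
    (∑ i ∈ range (N + 1), a i) * t ^ N ≤ ∑' n, a n * t ^ n :=
  calc (∑ i ∈ range (N + 1), a i) * t ^ N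
      ≤ ∑ i ∈ range (N + 1), a i * t ^ i := by
        rw [sum_mul]
        exact sum_le_sum fun i hi => mul_le_mul_of_nonneg_left
          (pow_le_pow_of_le_one ht₀ ht₁ (Nat.lt_succ_iff.1 (mem_range.1 hi))) (ha i)
    _ ≤ ∑' n, a n * t ^ n :=
        hs.sum_le_tsum _ fun i _ => mul_nonneg (ha i) (pow_nonneg ht₀ i)

theorem HSBound.exists_sum_range_le {F : ℕ → ℕ} {d : ℕ} (h : HSBound F d) :
    ∃ C : ℝ, 0 < C ∧ ∀ N : ℕ, 1 ≤ N → ∑ i ∈ range (N + 1), (F i : ℝ) ≤ C * N ^ d := by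
  obtain ⟨C, hC, hb⟩ := h
  refine ⟨2 ^ (d + 1) * C, by positivity, fun N hN => ?_⟩
  have hN' : (1 : ℝ) ≤ N := by exact_mod_cast hN
  set t : ℝ := 1 - 1 / (2 * N)
  have ht : t ∈ Set.Ioo (0 : ℝ) 1 := by
    constructor
    · rw [sub_pos, div_lt_one (by positivity)]; linarith
    · rw [sub_lt_self_iff]; positivity
  obtain ⟨hsum, hbound⟩ := hb t ht
  have h_tsum : ∑' n, (F n : ℝ) * t ^ n ≤ C * (2 * N) ^ d := by
    have h_one_sub : (1 - t) ^ d = ((2 * N : ℝ) ^ d)⁻¹ := by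
      simp only [t, sub_sub_cancel, one_div, inv_pow]
    rwa [h_one_sub, inv_mul_le_iff₀ (by positivity), mul_comm] at hbound
  have h_partial := sum_range_mul_pow_le_tsum (fun n => Nat.cast_nonneg (F n)) ht.1.le ht.2.le
    hsum N
  calc ∑ i ∈ range (N + 1), (F i : ℝ)
      = 2 * ((∑ i ∈ range (N + 1), (F i : ℝ)) * (1 / 2)) := by ring
    _ ≤ 2 * ((∑ i ∈ range (N + 1), (F i : ℝ)) * t ^ N) := by
        gcongr
        exact one_half_le_one_sub_pow N
    _ ≤ 2 * (C * (2 * N) ^ d) := by gcongr 2 * ?_; exact h_partial.trans h_tsum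
    _ = 2 ^ (d + 1) * C * N ^ d := by ring

end PoincareSeries

section DegreeFiltration

variable {k R : Type*} [Field k] [Ring R] [Algebra k R] (𝒜 : ℕ → Submodule k R)

def degreeLE (m : ℕ) : Submodule k R := ⨆ i : Fin (m + 1), 𝒜 i

theorem le_degreeLE {i m : ℕ} (h : i ≤ m) : 𝒜 i ≤ degreeLE 𝒜 m :=
  le_iSup_of_le (⟨i, Nat.lt_succ_of_le h⟩ : Fin (m + 1)) le_rfl

theorem degreeLE_mono : Monotone (degreeLE 𝒜) := fun _ _ h =>
  iSup_le fun i => le_degreeLE 𝒜 (by omega)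

instance [∀ i, FiniteDimensional k (𝒜 i)] (m : ℕ) : FiniteDimensional k (degreeLE 𝒜 m) :=
  Submodule.finiteDimensional_iSup _

theorem finrank_degreeLE_le [∀ i, FiniteDimensional k (𝒜 i)] (m : ℕ) :
    finrank k (degreeLE 𝒜 m) ≤ ∑ i ∈ range (m + 1), finrank k (𝒜 i) :=
  (Submodule.finrank_iSup_le_sum _).trans
    (Fin.sum_univ_eq_sum_range (fun i => finrank k (𝒜 i)) _).le

theorem one_le_degreeLE [SetLike.GradedOne 𝒜] (m : ℕ) : 1 ≤ degreeLE 𝒜 m :=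
  (Submodule.one_le.2 SetLike.GradedOne.one_mem).trans (le_degreeLE 𝒜 m.zero_le)

theorem degreeLE_mul_le [SetLike.GradedMul 𝒜] (m n : ℕ) :
    degreeLE 𝒜 m * degreeLE 𝒜 n ≤ degreeLE 𝒜 (m + n) := by
  simp only [degreeLE, Submodule.iSup_mul, Submodule.mul_iSup]
  refine iSup_le fun i => iSup_le fun j => ?_
  exact (Submodule.mul_le.2 fun a ha b hb => SetLike.GradedMul.mul_mem ha hb).trans
    (le_degreeLE 𝒜 (by omega))

theorem degreeLE_pow_le [SetLike.GradedMonoid 𝒜] (m n : ℕ) :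
    degreeLE 𝒜 m ^ n ≤ degreeLE 𝒜 (m * n) := by
  induction n with
  | zero => exact one_le_degreeLE 𝒜 0
  | succ n ih =>
    rw [pow_succ, Nat.mul_succ]
    exact (mul_le_mul' ih le_rfl).trans (degreeLE_mul_le 𝒜 _ _)

theorem exists_le_degreeLE [DirectSum.Decomposition 𝒜] (V : Submodule k R)
    [FiniteDimensional k V] : ∃ m, V ≤ degreeLE 𝒜 m := by
  have hV : V ≤ ⨆ i, 𝒜 i :=
    (DirectSum.Decomposition.isInternal 𝒜).submodule_iSup_eq_top ▸ le_top
  obtain ⟨s, hs⟩ := CompleteLattice.IsCompactElement.exists_finset_of_le_iSup _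
    ((Submodule.fg_iff_compact V).1 ((Submodule.fg_iff_finiteDimensional V).2 ‹_›)) _ hV
  exact ⟨s.sup id, hs.trans (iSup₂_le fun i hi => le_degreeLE 𝒜 (le_sup (f := id) hi))⟩

end DegreeFiltration

section Growth

variable {k R : Type*} [Field k] [CommRing R] [Algebra k R] (𝒜 : ℕ → Submodule k R)

theorem gkGrowth_le_sum_finrank [SetLike.GradedMonoid 𝒜] [∀ i, FiniteDimensional k (𝒜 i)]
    {V : Submodule k R} {m : ℕ} (hV : V ≤ degreeLE 𝒜 m) (n : ℕ) :
    gkGrowth V n ≤ ∑ i ∈ range (m * n + 1), finrank k (𝒜 i) := by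
  have h_pow (i : ℕ) (hi : i ∈ range (n + 1)) : V ^ i ≤ degreeLE 𝒜 (m * n) :=
    calc V ^ i ≤ degreeLE 𝒜 m ^ i := pow_le_pow_left' hV i
      _ ≤ degreeLE 𝒜 (m * i) := degreeLE_pow_le 𝒜 m i
      _ ≤ degreeLE 𝒜 (m * n) :=
          degreeLE_mono 𝒜 (Nat.mul_le_mul_left m (Nat.lt_succ_iff.1 (mem_range.1 hi)))
  have h_sum : ∑ i ∈ range (n + 1), V ^ i ≤ degreeLE 𝒜 (m * n) :=
    sum_induction _ (· ≤ degreeLE 𝒜 (m * n)) (fun _ _ => sup_le) bot_le h_pow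
  exact (Submodule.finrank_mono h_sum).trans (finrank_degreeLE_le 𝒜 _)

theorem exists_gkGrowth_le_of_hsBound [GradedAlgebra 𝒜] [∀ i, FiniteDimensional k (𝒜 i)]
    {d : ℕ} (h : HSBound (fun n => finrank k (𝒜 n)) d) (V : Submodule k R)
    [FiniteDimensional k V] :
    ∃ C : ℝ, 0 < C ∧ ∀ n ≥ 1, (gkGrowth V n : ℝ) ≤ C * (n : ℝ) ^ d := by
  obtain ⟨m, hm⟩ := exists_le_degreeLE 𝒜 V
  obtain ⟨C, hC, h_partial⟩ := h.exists_sum_range_le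
  refine ⟨C * (m + 1) ^ d, by positivity, fun n hn => ?_⟩
  calc (gkGrowth V n : ℝ) ≤ ∑ i ∈ range ((m + 1) * n + 1), (finrank k (𝒜 i) : ℝ) := by
        exact_mod_cast gkGrowth_le_sum_finrank 𝒜 (hm.trans (degreeLE_mono 𝒜 m.le_succ)) n
    _ ≤ C * (((m + 1) * n : ℕ) : ℝ) ^ d := h_partial _ (Nat.one_le_iff_ne_zero.2 (by positivity))
    _ = C * (m + 1) ^ d * (n : ℝ) ^ d := by push_cast; rw [mul_pow]; ring

end Growth

theorem limsup_log_div_log_le {f : ℕ → ℕ} {C : ℝ} {d : ℕ}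
    (h : ∀ᶠ n in atTop, (f n : ℝ) ≤ C * n ^ d) :
    limsup (fun n => ((log (f n) / log n : ℝ) : EReal)) atTop ≤ d := by
  -- `log C₁ ≥ 0` handles the terms with `f n = 0`, where `log 0 = 0`.
  set C₁ := max C 1
  have hC₁ : 1 ≤ C₁ := le_max_right _ _
  have h_le : (fun n => ((log (f n) / log n : ℝ) : EReal)) ≤ᶠ[atTop]
      fun n : ℕ => ((log C₁ / log n + d : ℝ) : EReal) := by
    filter_upwards [h, eventually_gt_atTop 1] with n hn hn1
    have hlogn : 0 < log n := log_pos (by exact_mod_cast hn1)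
    have hlog : log (f n) ≤ log C₁ + d * log n := by
      rcases (f n).eq_zero_or_pos with h0 | hpos
      · rw [h0, Nat.cast_zero, log_zero]
        have := log_nonneg hC₁
        positivity
      · rw [← log_pow, ← log_mul (by positivity) (by positivity)]
        refine log_le_log (by exact_mod_cast hpos) (hn.trans ?_)
        gcongr
        exact le_max_left _ _
    refine EReal.coe_le_coe_iff.2 ?_
    rwa [div_le_iff₀ hlogn, add_mul, div_mul_cancel₀ _ hlogn.ne']
  have h_lim : Tendsto (fun n : ℕ => ((log C₁ / log n + d : ℝ) : EReal)) atTop (nhds (d : ℝ)) :=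
    EReal.tendsto_coe.2 <| by
      simpa using ((tendsto_log_atTop.comp tendsto_natCast_atTop_atTop).const_div_atTop
        (log C₁)).add_const (d : ℝ)
  exact (limsup_le_limsup h_le).trans_eq h_lim.limsup_eq

theorem gkDim_le_hsDim_general {k R : Type*} [Field k] [CommRing R] [Algebra k R]
    (𝒜 : ℕ → Submodule k R) [GradedAlgebra 𝒜]
    (hHS : IsHilbertSerre 𝒜) :
    (∀ V : Submodule k R, FiniteDimensional k V →
      ∃ C : ℝ, 0 < C ∧ ∃ N : ℕ, ∀ n ≥ N,
        (gkGrowth V n : ℝ) ≤ C * (n : ℝ) ^ (hsDim 𝒜)) ∧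
    (⨆ V : {V : Submodule k R // FiniteDimensional k ↥V},
        Filter.limsup
          (fun n : ℕ =>
            ((Real.log (gkGrowth V.1 n) / Real.log n : ℝ) : EReal))
          Filter.atTop) ≤ (hsDim 𝒜 : EReal) := by
  obtain ⟨hfd, hne⟩ := hHS
  have h_dim : HSBound (fun n => finrank k (𝒜 n)) (hsDim 𝒜) := Nat.sInf_mem hne
  have h_growth (V : Submodule k R) (hV : FiniteDimensional k V) :
      ∃ C : ℝ, 0 < C ∧ ∃ N : ℕ, ∀ n ≥ N, (gkGrowth V n : ℝ) ≤ C * (n : ℝ) ^ (hsDim 𝒜) :=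
    let ⟨C, hC, hbound⟩ := exists_gkGrowth_le_of_hsBound 𝒜 h_dim V
    ⟨C, hC, 1, hbound⟩
  refine ⟨h_growth, iSup_le fun V => ?_⟩
  obtain ⟨C, -, N, hN⟩ := h_growth V.1 V.2
  exact limsup_log_div_log_le (eventually_atTop.2 ⟨N, hN⟩)

/-- for a Hilbert–Serre ring `R` with `d = d(R)`, the growth function
of every finite-dimensional subspace `V` is eventually bounded by `C · n^d`, and
consequently the Gelfand–Kirillov dimension
`sup_V limsup_n log(d_V(n))/log(n)` is at most `d(R)`. -/
theorem gkDim_le_hsDim {k R : Type*} [Field k] [CommRing R] [Algebra k R]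
    (𝒜 : ℕ → Submodule k R) [GradedAlgebra 𝒜] (h0 : 𝒜 0 = 1)
    (hHS : IsHilbertSerre 𝒜) :
    (∀ V : Submodule k R, FiniteDimensional k V →
      ∃ C : ℝ, 0 < C ∧ ∃ N : ℕ, ∀ n ≥ N,
        (gkGrowth V n : ℝ) ≤ C * (n : ℝ) ^ (hsDim 𝒜)) ∧
    (⨆ V : {V : Submodule k R // FiniteDimensional k ↥V},
        Filter.limsup
          (fun n : ℕ =>
            ((Real.log (gkGrowth V.1 n) / Real.log n : ℝ) : EReal))
          Filter.atTop) ≤ (hsDim 𝒜 : EReal) :=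
  gkDim_le_hsDim_general 𝒜 hHS
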